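/- For all 3×3 real matrices S, S̃ and all h, h̃ ∈ ℝ³, setting Γ_{ijk} := S_{ij} h_k − S̃_{ij} h̃_k: |Θ² ⋮ Γ|² = 6 (h · c(S) − h̃ · c(S̃))², where (Θ² ⋮ Γ)_{ijk} := Σ_{l,m,n} Θ²_{ijklmn} Γ_{lmn}. -/
import Mathlib


open Matrix

/-- The Levi-Civita tensor on `{1,2,3}³` (with indices in `Fin 3`). -/
def levicivita (i j k : Fin 3) : ℝ :=
  if (i, j, k) = (0, 1, 2) ∨ (i, j, k) = (1, 2, 0) ∨ (i, j, k) = (2, 0, 1) then 1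
  else if (i, j, k) = (2, 1, 0) ∨ (i, j, k) = (0, 2, 1) ∨ (i, j, k) = (1, 0, 2) then -1
  else 0

/-- The sixth-order tensor `Θ²_{ijklmn} = Υ_{kji} Υ_{nml}`. -/
def Theta2 (i j k l m n : Fin 3) : ℝ := levicivita k j i * levicivita n m l

/-- `c(S) = (S₃₂ − S₂₃, S₁₃ − S₃₁, S₂₁ − S₁₂)`, the "curl" vector of a matrix. -/
def cvec (S : Matrix (Fin 3) (Fin 3) ℝ) : Fin 3 → ℝ :=
  ![S 2 1 - S 1 2, S 0 2 - S 2 0, S 1 0 - S 0 1]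

lemma lc000 : levicivita (0:Fin 3) 0 0 = 0 := by rw [levicivita, if_neg (by decide), if_neg (by decide)]
lemma lc001 : levicivita (0:Fin 3) 0 1 = 0 := by rw [levicivita, if_neg (by decide), if_neg (by decide)]
lemma lc002 : levicivita (0:Fin 3) 0 2 = 0 := by rw [levicivita, if_neg (by decide), if_neg (by decide)]
lemma lc010 : levicivita (0:Fin 3) 1 0 = 0 := by rw [levicivita, if_neg (by decide), if_neg (by decide)]
lemma lc011 : levicivita (0:Fin 3) 1 1 = 0 := by rw [levicivita, if_neg (by decide), if_neg (by decide)]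
lemma lc012 : levicivita (0:Fin 3) 1 2 = 1 := by rw [levicivita, if_pos (by decide)]
lemma lc020 : levicivita (0:Fin 3) 2 0 = 0 := by rw [levicivita, if_neg (by decide), if_neg (by decide)]
lemma lc021 : levicivita (0:Fin 3) 2 1 = -1 := by rw [levicivita, if_neg (by decide), if_pos (by decide)]
lemma lc022 : levicivita (0:Fin 3) 2 2 = 0 := by rw [levicivita, if_neg (by decide), if_neg (by decide)]
lemma lc100 : levicivita (1:Fin 3) 0 0 = 0 := by rw [levicivita, if_neg (by decide), if_neg (by decide)]
lemma lc101 : levicivita (1:Fin 3) 0 1 = 0 := by rw [levicivita, if_neg (by decide), if_neg (by decide)]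
lemma lc102 : levicivita (1:Fin 3) 0 2 = -1 := by rw [levicivita, if_neg (by decide), if_pos (by decide)]
lemma lc110 : levicivita (1:Fin 3) 1 0 = 0 := by rw [levicivita, if_neg (by decide), if_neg (by decide)]
lemma lc111 : levicivita (1:Fin 3) 1 1 = 0 := by rw [levicivita, if_neg (by decide), if_neg (by decide)]
lemma lc112 : levicivita (1:Fin 3) 1 2 = 0 := by rw [levicivita, if_neg (by decide), if_neg (by decide)]
lemma lc120 : levicivita (1:Fin 3) 2 0 = 1 := by rw [levicivita, if_pos (by decide)]
lemma lc121 : levicivita (1:Fin 3) 2 1 = 0 := by rw [levicivita, if_neg (by decide), if_neg (by decide)]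
lemma lc122 : levicivita (1:Fin 3) 2 2 = 0 := by rw [levicivita, if_neg (by decide), if_neg (by decide)]
lemma lc200 : levicivita (2:Fin 3) 0 0 = 0 := by rw [levicivita, if_neg (by decide), if_neg (by decide)]
lemma lc201 : levicivita (2:Fin 3) 0 1 = 1 := by rw [levicivita, if_pos (by decide)]
lemma lc202 : levicivita (2:Fin 3) 0 2 = 0 := by rw [levicivita, if_neg (by decide), if_neg (by decide)]
lemma lc210 : levicivita (2:Fin 3) 1 0 = -1 := by rw [levicivita, if_neg (by decide), if_pos (by decide)]
lemma lc211 : levicivita (2:Fin 3) 1 1 = 0 := by rw [levicivita, if_neg (by decide), if_neg (by decide)]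
lemma lc212 : levicivita (2:Fin 3) 1 2 = 0 := by rw [levicivita, if_neg (by decide), if_neg (by decide)]
lemma lc220 : levicivita (2:Fin 3) 2 0 = 0 := by rw [levicivita, if_neg (by decide), if_neg (by decide)]
lemma lc221 : levicivita (2:Fin 3) 2 1 = 0 := by rw [levicivita, if_neg (by decide), if_neg (by decide)]
lemma lc222 : levicivita (2:Fin 3) 2 2 = 0 := by rw [levicivita, if_neg (by decide), if_neg (by decide)]

/-- For all `3×3` matrices `S, S̃` and `h, h̃ ∈ ℝ³`, with `Γ_{ijk} = S_{ij} h_k − S̃_{ij} h̃_k`: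
`|Θ² ⋮ Γ|² = 6 (h · c(S) − h̃ · c(S̃))²`. -/
theorem Theta2_contraction_norm (S S' : Matrix (Fin 3) (Fin 3) ℝ) (h h' : Fin 3 → ℝ)
    (Γ : Fin 3 → Fin 3 → Fin 3 → ℝ)
    (hΓ : ∀ i j k, Γ i j k = S i j * h k - S' i j * h' k) :
    (∑ i, ∑ j, ∑ k, (∑ l, ∑ m, ∑ n, Theta2 i j k l m n * Γ l m n) ^ 2)
      = 6 * (h ⬝ᵥ cvec S - h' ⬝ᵥ cvec S') ^ 2 := by
  have key : ∀ i j k, (∑ l, ∑ m, ∑ n, Theta2 i j k l m n * Γ l m n)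
      = levicivita k j i * (h ⬝ᵥ cvec S - h' ⬝ᵥ cvec S') := by
    intro i j k
    simp only [Theta2, Fin.sum_univ_three, hΓ, cvec, dotProduct,
      Matrix.cons_val_zero, Matrix.cons_val_one, Matrix.head_cons,
      Matrix.cons_val_two, Matrix.tail_cons, lc000, lc001, lc002, lc010, lc011, lc012, lc020, lc021, lc022, lc100, lc101, lc102, lc110, lc111, lc112, lc120, lc121, lc122, lc200, lc201, lc202, lc210, lc211, lc212, lc220, lc221, lc222]
    ring
  simp only [key]
  simp only [mul_pow, Fin.sum_univ_three, lc000, lc001, lc002, lc010, lc011, lc012, lc020, lc021, lc022, lc100, lc101, lc102, lc110, lc111, lc112, lc120, lc121, lc122, lc200, lc201, lc202, lc210, lc211, lc212, lc220, lc221, lc222]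
  ring
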